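/- arXiv:1804.05522 — 6 statements merged into one kernel-verified Lean document; each statement's English description precedes it below -/
import Mathlib

section
/- Let x = (x_1, ..., x_N) be a real vector with strictly increasing positive entries. Then the symmetric Cauchy matrix C with entries C_{ij} = 1/(x_i + x_j) is positive definite. -/
/-!
Since `1 / (a + b) = ∫₀^∞ e^{-(a+b)t} dt` for `a + b > 0`, the quadratic form of the matrix
at `v` is `∫₀^∞ (∑ᵢ vᵢ e^{-xᵢ t})² dt ≥ 0`. If it vanishes, the continuous exponential sum vanishes on
`(0, ∞)`; evaluating it at `t = 1, …, N` gives a Vandermonde system in the distinct nodes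
`e^{-xᵢ}`, so `v = 0`.
-/

open MeasureTheory Set Real Matrix

lemma integral_exp_neg_mul_Ioi_zero {b : ℝ} (hb : 0 < b) :
    ∫ t in Ioi (0 : ℝ), exp (-b * t) = 1 / b := by
  rw [integral_exp_mul_Ioi (neg_neg_iff_pos.2 hb)]
  simp [div_neg, neg_div]

section ExpSum

variable {ι : Type*} [Fintype ι] {c : ι → ℝ} (v : ι → ℝ)

lemma sq_sum_mul_exp (t : ℝ) :
    (∑ i, v i * exp (-c i * t)) ^ 2 = ∑ i, ∑ j, v i * v j * exp (-(c i + c j) * t) := by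
  simp only [sq, Finset.sum_mul_sum, neg_add, add_mul, exp_add]
  refine Finset.sum_congr rfl fun i _ => Finset.sum_congr rfl fun j _ => ?_
  ring

lemma integrableOn_sq_sum_mul_exp (hc : ∀ i, 0 < c i) :
    IntegrableOn (fun t => (∑ i, v i * exp (-c i * t)) ^ 2) (Ioi 0) := by
  simp_rw [sq_sum_mul_exp]
  exact integrable_finsetSum _ fun i _ => integrable_finsetSum _ fun j _ =>
    (exp_neg_integrableOn_Ioi 0 (add_pos (hc i) (hc j))).const_mul _

lemma sum_mul_div_add_eq_integral_sq (hc : ∀ i, 0 < c i) :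
    ∑ i, ∑ j, v i * v j / (c i + c j) = ∫ t in Ioi 0, (∑ i, v i * exp (-c i * t)) ^ 2 := by
  have hint (i j : ι) : IntegrableOn (fun t => v i * v j * exp (-(c i + c j) * t)) (Ioi 0) :=
    (exp_neg_integrableOn_Ioi 0 (add_pos (hc i) (hc j))).const_mul _
  simp_rw [sq_sum_mul_exp]
  rw [integral_finsetSum _ fun i _ => integrable_finsetSum _ fun j _ => hint i j]
  refine Finset.sum_congr rfl fun i _ => ?_
  rw [integral_finsetSum _ fun j _ => hint i j]
  refine Finset.sum_congr rfl fun j _ => ?_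
  rw [integral_const_mul, integral_exp_neg_mul_Ioi_zero (add_pos (hc i) (hc j)), mul_one_div]

end ExpSum

lemma eq_zero_of_sum_mul_exp_eq_zero {n : ℕ} {c v : Fin n → ℝ} (hc : Function.Injective c)
    (h : ∀ t ∈ Ioi (0 : ℝ), ∑ i, v i * exp (-c i * t) = 0) : v = 0 := by
  have hinj : Function.Injective fun i => exp (-c i) := fun i j hij => hc (by simpa using hij)
  have hw : (fun i => v i * exp (-c i)) = 0 := by
    refine eq_zero_of_forall_pow_sum_mul_pow_eq_zero hinj fun k => ?_
    rw [← h (k + 1) (mem_Ioi.2 (by positivity))]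
    refine Finset.sum_congr rfl fun i _ => ?_
    rw [mul_assoc, ← pow_succ', ← exp_nat_mul]
    push_cast
    ring_nf
  funext i
  simpa [exp_ne_zero] using congrFun hw i

theorem cauchy_matrix_posDef (N : ℕ) (x : Fin N → ℝ)
    (hpos : ∀ i, 0 < x i) (hmono : StrictMono x) :
    (Matrix.of fun i j : Fin N => 1 / (x i + x j)).PosDef := by
  refine posDef_iff_dotProduct_mulVec.2 ⟨?_, fun v hv => ?_⟩
  · ext i j
    simp [add_comm]
  set f : ℝ → ℝ := fun t => ∑ i, v i * exp (-x i * t)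
  have hquad : star v ⬝ᵥ (Matrix.of fun i j => 1 / (x i + x j)) *ᵥ v = ∫ t in Ioi 0, f t ^ 2 := by
    rw [← sum_mul_div_add_eq_integral_sq v hpos]
    simp only [dotProduct, mulVec, of_apply, star_trivial, Finset.mul_sum]
    exact Finset.sum_congr rfl fun i _ => Finset.sum_congr rfl fun j _ => by ring
  rw [hquad]
  refine (setIntegral_nonneg measurableSet_Ioi fun t _ => sq_nonneg (f t)).lt_of_ne'
    fun h0 => hv ?_
  have hsq_ae : (fun t => f t ^ 2) =ᵐ[volume.restrict (Ioi 0)] 0 :=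
    (setIntegral_eq_zero_iff_of_nonneg_ae (ae_of_all _ fun t => sq_nonneg (f t))
      (integrableOn_sq_sum_mul_exp v hpos)).1 h0
  have hsq_zero : EqOn (fun t => f t ^ 2) 0 (Ioi 0) :=
    Measure.eqOn_open_of_ae_eq hsq_ae isOpen_Ioi (by fun_prop) continuousOn_const
  exact eq_zero_of_sum_mul_exp_eq_zero hmono.injective fun t ht =>
    (pow_eq_zero_iff two_ne_zero).1 (hsq_zero ht)
end

section
/- Let 1 < α < 2 and let x ∈ ℝ^N have entries x_i = i + (p - α)/2 for a fixed integer p ≥ 0. Then the N×N matrix H_p with entries (H_p)_{ij} = (i + j + 1 + p)/(i + j - α + p) is positive semidefinite. -/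
/-!
With `x i = i + (p - α) / 2 > 0` (indices from 1), the `(i, j)` entry is
`(x i + x j + α + 1) / (x i + x j)`, so the matrix is `e eᵀ + (α + 1) C` with the Cauchy matrix
`C i j = (x i + x j)⁻¹`. The Laplace transform `(x + y)⁻¹ = ∫₀^∞ e^{-x t} e^{-y t} dt` exhibits
`C` as a Gram matrix in `L²(0, ∞)`, hence positive semidefinite.
-/

open MeasureTheory Set

namespace Matrix

variable {ι : Type*} [Fintype ι]

theorem posSemidef_of_integral_mul {α : Type*} [MeasurableSpace α] (μ : Measure α)
    (f : ι → α → ℝ) (hf : ∀ i j, Integrable (fun a => f i a * f j a) μ) :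
    (of fun i j => ∫ a, f i a * f j a ∂μ).PosSemidef := by
  refine .of_dotProduct_mulVec_nonneg ?_ fun c => ?_
  · ext i j
    simp only [conjTranspose_apply, of_apply, star_trivial, mul_comm]
  have hterm : ∀ i j, Integrable (fun a => c i * c j * (f i a * f j a)) μ :=
    fun i j => (hf i j).const_mul _
  calc 0 ≤ ∫ a, (∑ i, c i * f i a) ^ 2 ∂μ := integral_nonneg fun a => sq_nonneg _
    _ = ∫ a, ∑ i, ∑ j, c i * c j * (f i a * f j a) ∂μ := by
      simp_rw [sq, Finset.sum_mul_sum, mul_mul_mul_comm]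
    _ = ∑ i, ∑ j, c i * c j * ∫ a, f i a * f j a ∂μ := by
      rw [integral_finsetSum _ fun i _ => integrable_finsetSum _ fun j _ => hterm i j]
      simp_rw [integral_finsetSum _ fun j _ => hterm _ j, integral_const_mul]
    _ = star c ⬝ᵥ ((of fun i j => ∫ a, f i a * f j a ∂μ) *ᵥ c) := by
      simp only [dotProduct, mulVec, of_apply, Pi.star_apply, star_trivial, Finset.mul_sum]
      exact Finset.sum_congr rfl fun i _ => Finset.sum_congr rfl fun j _ => by ring

theorem posSemidef_cauchy (x : ι → ℝ) (hx : ∀ i, 0 < x i) :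
    (of fun i j => (x i + x j)⁻¹).PosSemidef := by
  have hneg : ∀ i j, -(x i + x j) < 0 := fun i j => by linarith [hx i, hx j]
  have hlaplace : ∀ i j, (x i + x j)⁻¹
      = ∫ t in Ioi 0, Real.exp (-x i * t) * Real.exp (-x j * t) := by
    intro i j
    simp_rw [← Real.exp_add, ← add_mul, ← neg_add]
    rw [integral_exp_mul_Ioi (hneg i j), mul_zero, Real.exp_zero, neg_div_neg_eq, one_div]
  simp_rw [hlaplace]
  refine posSemidef_of_integral_mul _ _ fun i j => ?_
  simpa only [IntegrableOn, ← Real.exp_add, ← add_mul, neg_add]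
    using integrableOn_exp_mul_Ioi (hneg i j) 0

end Matrix

theorem hadamard_factor_posSemidef (N : ℕ) (α : ℝ) (hα : 1 < α) (hα' : α < 2) (p : ℕ) :
    (Matrix.of fun i j : Fin N =>
      (((i : ℕ) + 1 : ℝ) + ((j : ℕ) + 1) + 1 + p) /
        (((i : ℕ) + 1 : ℝ) + ((j : ℕ) + 1) - α + p)).PosSemidef := by
  set x : Fin N → ℝ := fun i => (i : ℕ) + 1 + (p - α) / 2
  have hx : ∀ i, 0 < x i := fun i => by
    have : (0 : ℝ) ≤ (i : ℕ) := Nat.cast_nonneg _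
    have : (0 : ℝ) ≤ p := Nat.cast_nonneg _
    simp only [x]; linarith
  convert (Matrix.posSemidef_vecMulVec_self_star (fun _ : Fin N => (1 : ℝ))).add
    ((Matrix.posSemidef_cauchy x hx).smul (show 0 ≤ α + 1 by linarith)) using 1
  ext i j
  have hden : x i + x j = ((i : ℕ) + 1 : ℝ) + ((j : ℕ) + 1) - α + p := by simp only [x]; ring
  have hpos : 0 < x i + x j := add_pos (hx i) (hx j)
  simp only [Matrix.of_apply, Matrix.add_apply, Matrix.smul_apply, Matrix.vecMulVec_apply,
    Pi.star_apply, star_one, smul_eq_mul, ← hden]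
  field_simp
  simp only [x]; ring
end

section
/- For 1 ≤ α ≤ 2, the N×N Hankel matrix H with entries H_{ij} = g_{i+j}^(α), where g_k^(α) = (-1)^k · binomial(α,k), is positive semidefinite. -/
/-!
For `1 < α < 2` the coefficients are moments of a positive weight: from `k = 2` on, `g_k` and
the Beta integral `B(k - α, α + 1) = ∫₀¹ t ^ (k - α - 1) (1 - t) ^ α dt` satisfy the same
recurrence `x_{k+1} = (k - α) / (k + 1) ⬝ x_k`, so `g_k = c ⬝ B(k - α, α + 1)` with
`c = g_2 / B(2 - α, α + 1) ≥ 0`. Hence `H` is the Gram matrix of the monomials `t ^ (i - 1)`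
for the weight `t ^ (1 - α) (1 - t) ^ α` on `[0, 1]`. The endpoints `α = 1, 2` follow since `H`
depends continuously on `α` and positive semidefinite matrices form a closed set.
-/

/-- Alternating fractional binomial coefficient `g_k^(α) = (-1)^k ⬝ binom(α,k)`. -/
noncomputable def fracBinom (α : ℝ) (k : ℕ) : ℝ :=
  ((-1 : ℝ) ^ k / (Nat.factorial k : ℝ)) * ∏ i ∈ Finset.range k, (α - i)

open Real Set MeasureTheory Matrix

open scoped ComplexOrder in
theorem Matrix.isClosed_setOf_posSemidef {n 𝕜 : Type*} [Fintype n] [RCLike 𝕜] :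
    IsClosed {A : Matrix n n 𝕜 | A.PosSemidef} := by
  simp only [posSemidef_iff_dotProduct_mulVec, Set.ofPred_and, Set.ofPred_forall]
  refine .inter (isClosed_eq (by fun_prop) continuous_id) (isClosed_iInter fun x => ?_)
  exact isClosed_le continuous_const (by fun_prop)

theorem Matrix.posSemidef_of_integral_mul_mul {Ω ι : Type*} [MeasurableSpace Ω] [Fintype ι]
    (μ : Measure Ω) (f : ι → Ω → ℝ) (w : Ω → ℝ) (hw : ∀ᵐ t ∂μ, 0 ≤ w t)
    (hint : ∀ i j, Integrable (fun t => f i t * f j t * w t) μ) :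
    (Matrix.of fun i j => ∫ t, f i t * f j t * w t ∂μ).PosSemidef := by
  refine .of_dotProduct_mulVec_nonneg (IsHermitian.ext fun i j => ?_) fun x => ?_
  · simp only [of_apply, star_trivial, mul_comm (f i _)]
  have hexpand (t : Ω) : (∑ i, x i * f i t) ^ 2 * w t =
      ∑ i, ∑ j, x i * x j * (f i t * f j t * w t) := by
    rw [sq, Finset.sum_mul_sum, Finset.sum_mul]
    refine Finset.sum_congr rfl fun i _ => ?_
    rw [Finset.sum_mul]
    exact Finset.sum_congr rfl fun j _ => by ring
  have hquad : star x ⬝ᵥ ((Matrix.of fun i j => ∫ t, f i t * f j t * w t ∂μ) *ᵥ x) =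
      ∫ t, (∑ i, x i * f i t) ^ 2 * w t ∂μ := by
    simp only [hexpand, dotProduct, mulVec, of_apply, star_trivial, Finset.mul_sum]
    rw [integral_finsetSum _ fun i _ => integrable_finsetSum _ fun j _ => (hint i j).const_mul _]
    refine Finset.sum_congr rfl fun i _ => ?_
    rw [integral_finsetSum _ fun j _ => (hint i j).const_mul _]
    simp only [integral_const_mul]
    exact Finset.sum_congr rfl fun j _ => by ring
  rw [hquad]
  exact integral_nonneg_of_ae (hw.mono fun t ht => mul_nonneg (sq_nonneg _) ht)

/-- `betaMoment p q = B(p + 1, q + 1)`. -/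
noncomputable def betaMoment (p q : ℝ) : ℝ :=
  ∫ t in (0 : ℝ)..1, t ^ p * (1 - t) ^ q

lemma intervalIntegrable_rpow_mul_one_sub_rpow {p q : ℝ} (hp : -1 < p) (hq : 0 ≤ q) :
    IntervalIntegrable (fun t : ℝ => t ^ p * (1 - t) ^ q) volume 0 1 :=
  (intervalIntegral.intervalIntegrable_rpow' hp).mul_continuousOn
    ((continuous_const.sub continuous_id).rpow_const fun _ => Or.inr hq).continuousOn

lemma betaMoment_pos {p q : ℝ} (hp : -1 < p) (hq : 0 ≤ q) : 0 < betaMoment p q :=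
  intervalIntegral.intervalIntegral_pos_of_pos_on (intervalIntegrable_rpow_mul_one_sub_rpow hp hq)
    (fun _ ht => mul_pos (rpow_pos_of_pos ht.1 _) (rpow_pos_of_pos (sub_pos.2 ht.2) _))
    zero_lt_one

/-- Integration by parts against `t ^ p * (1 - t) ^ (q + 1)`, which vanishes at both ends. -/
lemma betaMoment_recurrence {p q : ℝ} (hp : 0 < p) (hq : 0 ≤ q) :
    (p + q + 1) * betaMoment p q = p * betaMoment (p - 1) q := by
  have hderiv : ∀ t ∈ Ioo (0 : ℝ) 1, HasDerivAt (fun t => t ^ p * (1 - t) ^ (q + 1))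
      (p * (t ^ (p - 1) * (1 - t) ^ q) - (p + q + 1) * (t ^ p * (1 - t) ^ q)) t := by
    rintro t ⟨ht0, ht1⟩
    have h1 := ((hasDerivAt_id t).const_sub 1).rpow_const (p := q + 1)
      (Or.inl (sub_pos.2 ht1).ne')
    refine ((hasDerivAt_rpow_const (p := p) (Or.inl ht0.ne')).mul h1).congr_deriv ?_
    simp only [id, add_sub_cancel_right]
    rw [rpow_add_one (sub_pos.2 ht1).ne', rpow_sub_one ht0.ne']
    field_simp
    ring
  have hint₁ := intervalIntegrable_rpow_mul_one_sub_rpow (p := p - 1) (by linarith) hq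
  have hint₂ := intervalIntegrable_rpow_mul_one_sub_rpow (p := p) (by linarith) hq
  have hcont : ContinuousOn (fun t : ℝ => t ^ p * (1 - t) ^ (q + 1)) (Icc 0 1) :=
    ((continuous_id.rpow_const fun _ => Or.inr hp.le).mul
      ((continuous_const.sub continuous_id).rpow_const fun _ => Or.inr (by linarith))).continuousOn
  have hftc := intervalIntegral.integral_eq_sub_of_hasDerivAt_of_le zero_le_one hcont hderiv
    ((hint₁.const_mul p).sub (hint₂.const_mul (p + q + 1)))
  rw [intervalIntegral.integral_sub (hint₁.const_mul _) (hint₂.const_mul _),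
    intervalIntegral.integral_const_mul, intervalIntegral.integral_const_mul] at hftc
  simp only [sub_self, zero_rpow hp.ne', zero_rpow (by linarith : q + 1 ≠ 0), mul_zero,
    zero_mul, sub_zero] at hftc
  unfold betaMoment
  linarith

lemma rpow_natCast_add_natCast_add {t : ℝ} (ht : 0 < t) (m n : ℕ) (p : ℝ) :
    t ^ ((m : ℝ) + n + p) = t ^ m * t ^ n * t ^ p := by
  rw [rpow_add ht, rpow_add ht, rpow_natCast, rpow_natCast]

lemma integrableOn_pow_mul_pow_mul_rpow_mul_one_sub_rpow (m n : ℕ) {p q : ℝ} (hp : -1 < p)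
    (hq : 0 ≤ q) :
    IntegrableOn (fun t : ℝ => t ^ m * t ^ n * (t ^ p * (1 - t) ^ q)) (Ioc 0 1) := by
  have hint := intervalIntegrable_rpow_mul_one_sub_rpow (p := m + n + p)
    (by linarith [Nat.cast_nonneg (α := ℝ) m, Nat.cast_nonneg (α := ℝ) n]) hq
  refine hint.1.congr_fun (fun t ht => ?_) measurableSet_Ioc
  dsimp only
  rw [rpow_natCast_add_natCast_add ht.1, mul_assoc]

lemma betaMoment_natCast_add_natCast_add (m n : ℕ) (p q : ℝ) :
    betaMoment (m + n + p) q = ∫ t in Ioc 0 1, t ^ m * t ^ n * (t ^ p * (1 - t) ^ q) := by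
  rw [betaMoment, intervalIntegral.integral_of_le zero_le_one]
  refine setIntegral_congr_fun measurableSet_Ioc fun t ht => ?_
  rw [rpow_natCast_add_natCast_add ht.1, mul_assoc]

lemma fracBinom_succ (α : ℝ) (k : ℕ) :
    fracBinom α (k + 1) = (k - α) / (k + 1) * fracBinom α k := by
  simp only [fracBinom, Finset.prod_range_succ, Nat.factorial_succ, pow_succ]
  push_cast
  field_simp
  ring

lemma fracBinom_two (α : ℝ) : fracBinom α 2 = α * (α - 1) / 2 := by
  norm_num [fracBinom, Finset.prod_range_succ]
  ring

lemma fracBinom_eq_mul_betaMoment {α : ℝ} (hα₀ : 0 ≤ α) (hα₂ : α < 2) {k : ℕ} (hk : 2 ≤ k) :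
    fracBinom α k = fracBinom α 2 / betaMoment (1 - α) α * betaMoment (k - α - 1) α := by
  induction k, hk using Nat.le_induction with
  | base =>
    have hB := (betaMoment_pos (p := 1 - α) (by linarith) hα₀).ne'
    rw [show ((2 : ℕ) : ℝ) - α - 1 = 1 - α by norm_num; ring, div_mul_cancel₀ _ hB]
  | succ n hn ih =>
    have hnα : α < n := by linarith [show (2 : ℝ) ≤ n by exact_mod_cast hn]
    have hrec := betaMoment_recurrence (p := n - α) (by linarith) hα₀
    rw [sub_add_cancel] at hrec
    rw [fracBinom_succ, ih, show ((n + 1 : ℕ) : ℝ) - α - 1 = n - α by push_cast; ring,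
      mul_left_comm, div_mul_eq_mul_div (n - α : ℝ), ← hrec,
      mul_div_cancel_left₀ _ (by positivity)]

noncomputable def fracBinomHankel (N : ℕ) (α : ℝ) : Matrix (Fin N) (Fin N) ℝ :=
  Matrix.of fun i j => fracBinom α ((i : ℕ) + 1 + ((j : ℕ) + 1))

lemma continuous_fracBinomHankel (N : ℕ) : Continuous (fracBinomHankel N) := by
  unfold fracBinomHankel fracBinom
  fun_prop

lemma posSemidef_fracBinomHankel_of_mem_Ioo (N : ℕ) {α : ℝ} (hα : α ∈ Ioo 1 2) :
    (fracBinomHankel N α).PosSemidef := by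
  obtain ⟨hα₁, hα₂⟩ := hα
  set c := fracBinom α 2 / betaMoment (1 - α) α
  have hc : 0 ≤ c :=
    div_nonneg (by rw [fracBinom_two]; nlinarith) (betaMoment_pos (by linarith) (by linarith)).le
  have hgram : fracBinomHankel N α = c • Matrix.of fun i j : Fin N =>
      ∫ t in Ioc 0 1, t ^ (i : ℕ) * t ^ (j : ℕ) * (t ^ (1 - α) * (1 - t) ^ α) := by
    ext i j
    rw [fracBinomHankel, of_apply, fracBinom_eq_mul_betaMoment (by linarith) hα₂ (by omega),
      Matrix.smul_apply, of_apply, ← betaMoment_natCast_add_natCast_add, smul_eq_mul]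
    congr 2
    push_cast
    ring
  rw [hgram]
  refine (posSemidef_of_integral_mul_mul _ _ _ ?_ fun i j => ?_).smul hc
  · exact ae_restrict_of_forall_mem measurableSet_Ioc fun t ht =>
      mul_nonneg (rpow_nonneg ht.1.le _) (rpow_nonneg (sub_nonneg.2 ht.2) _)
  · exact integrableOn_pow_mul_pow_mul_rpow_mul_one_sub_rpow _ _ (by linarith) (by linarith)

/-- The Hankel matrix `H_{ij} = g_{i+j}^(α)` (indices `i, j = 1, …, N`) is
positive semidefinite for `1 ≤ α ≤ 2`. -/
theorem hankel_fracBinom_posSemidef (N : ℕ) (α : ℝ) (hα : 1 ≤ α) (hα' : α ≤ 2) :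
    (Matrix.of fun i j : Fin N => fracBinom α (((i : ℕ) + 1) + ((j : ℕ) + 1))).PosSemidef := by
  have hclosed := isClosed_setOf_posSemidef.preimage (continuous_fracBinomHankel N)
  have hIcc : Icc (1 : ℝ) 2 ⊆ fracBinomHankel N ⁻¹' {A | A.PosSemidef} := by
    rw [← closure_Ioo (by norm_num : (1 : ℝ) ≠ 2), hclosed.closure_subset_iff]
    exact fun α hα => posSemidef_fracBinomHankel_of_mem_Ioo N hα
  exact hIcc ⟨hα, hα'⟩
end

section
/- If A ∈ ℂ^{N×N} is invertible and quasiseparable of rank k, then A^{-1} has quasiseparable rank at most k. -/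
open Matrix Module

lemma finrank_map_add_inf_ker {V V' : Type*} [AddCommGroup V] [Module ℂ V]
    [AddCommGroup V'] [Module ℂ V'] [FiniteDimensional ℂ V]
    (f : V →ₗ[ℂ] V') (U : Submodule ℂ V) :
    finrank ℂ (U.map f) + finrank ℂ (U ⊓ LinearMap.ker f : Submodule ℂ V) = finrank ℂ U := by
  have h := LinearMap.finrank_range_add_finrank_ker (f.domRestrict U)
  rw [LinearMap.range_domRestrict, LinearMap.ker_domRestrict] at h
  rw [← h]
  congr 1
  have h1 : Submodule.comap U.subtype (LinearMap.ker f)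
      = Submodule.comap U.subtype (U ⊓ LinearMap.ker f) := by
    rw [Submodule.comap_inf]; simp
  rw [h1]
  exact (LinearEquiv.finrank_eq (Submodule.comapSubtypeEquivOfLe inf_le_left)).symm

lemma key {N : ℕ} (A : Matrix (Fin N) (Fin N) ℂ) (hinv : IsUnit A) (t : ℕ) :
    (A⁻¹.submatrix (fun i : {i : Fin N // t ≤ (i : ℕ)} => i.1)
        (fun j : {j : Fin N // (j : ℕ) < t} => j.1)).rank
      = (A.submatrix (fun i : {i : Fin N // t ≤ (i : ℕ)} => i.1)
        (fun j : {j : Fin N // (j : ℕ) < t} => j.1)).rank := by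
  have hdet : IsUnit A.det := (Matrix.isUnit_iff_isUnit_det A).mp hinv
  have hAB : A * A⁻¹ = 1 := Matrix.mul_nonsing_inv A hdet
  have hBA : A⁻¹ * A = 1 := Matrix.nonsing_inv_mul A hdet
  set P : Matrix {i : Fin N // t ≤ (i : ℕ)} (Fin N) ℂ :=
    (1 : Matrix (Fin N) (Fin N) ℂ).submatrix (fun i => i.1) id with hP
  set E : Matrix (Fin N) {j : Fin N // (j : ℕ) < t} ℂ :=
    (1 : Matrix (Fin N) (Fin N) ℂ).submatrix id (fun j => j.1) with hE
  have hfact : ∀ M : Matrix (Fin N) (Fin N) ℂ,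
      M.submatrix (fun i : {i : Fin N // t ≤ (i : ℕ)} => i.1)
        (fun j : {j : Fin N // (j : ℕ) < t} => j.1) = P * M * E := by
    intro M; ext i j
    simp [hP, hE, Matrix.mul_apply, Matrix.one_apply]
  set a := A.mulVecLin with ha
  set b := (A⁻¹).mulVecLin with hb
  set p := P.mulVecLin with hp'
  set e := E.mulVecLin with he'
  have hab : a ∘ₗ b = LinearMap.id := by
    rw [ha, hb, ← Matrix.mulVecLin_mul, hAB, Matrix.mulVecLin_one]
  have hba : b ∘ₗ a = LinearMap.id := by
    rw [ha, hb, ← Matrix.mulVecLin_mul, hBA, Matrix.mulVecLin_one]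
  set ae : (Fin N → ℂ) ≃ₗ[ℂ] (Fin N → ℂ) := LinearEquiv.ofLinear a b hab hba with hae
  set W := LinearMap.range e with hW
  have hp : ∀ (v : Fin N → ℂ) (i : {i : Fin N // t ≤ (i : ℕ)}), p v i = v i.1 := by
    intro v i
    simp [hp', hP, Matrix.mulVecLin_apply, Matrix.mulVec, dotProduct, Matrix.one_apply]
  have he : ∀ (x : {j : Fin N // (j : ℕ) < t} → ℂ) (i : Fin N),
      e x i = if h : (i : ℕ) < t then x ⟨i, h⟩ else 0 := by
    intro x i
    simp only [he', hE, Matrix.mulVecLin_apply, Matrix.mulVec, dotProduct,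
      Matrix.submatrix_apply, id_eq, Matrix.one_apply]
    by_cases h : (i : ℕ) < t
    · rw [dif_pos h, Finset.sum_eq_single (⟨i, h⟩ : {j : Fin N // (j : ℕ) < t})]
      · simp
      · intro j _ hj
        rw [if_neg, zero_mul]
        exact fun hij => hj (Subtype.ext hij.symm)
      · simp
    · rw [dif_neg h]
      apply Finset.sum_eq_zero
      intro j _
      rw [if_neg, zero_mul]
      intro hij
      exact h (hij ▸ j.2)
  have hker : LinearMap.ker p = W := by
    apply le_antisymm
    · intro v hv
      rw [LinearMap.mem_ker] at hv
      refine ⟨fun j => v j.1, ?_⟩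
      funext i
      rw [he]
      split_ifs with h
      · rfl
      · have := congrFun hv ⟨i, Nat.le_of_not_lt h⟩
        rw [hp] at this
        exact this.symm
    · rintro _ ⟨x, rfl⟩
      rw [LinearMap.mem_ker]
      funext i
      rw [hp, he, dif_neg (by omega : ¬ ((i.1 : ℕ) < t))]
      rfl
  have hrank : ∀ M : Matrix (Fin N) (Fin N) ℂ,
      (P * M * E).rank = finrank ℂ ((W.map M.mulVecLin).map p) := by
    intro M
    rw [Matrix.rank, Matrix.mulVecLin_mul, Matrix.mulVecLin_mul, LinearMap.range_comp,
      Submodule.map_comp, ← hp', ← he', ← hW]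
  have hinj : Function.Injective ⇑a := ae.injective
  have haw : W.map a = W.map (ae : (Fin N → ℂ) →ₗ[ℂ] (Fin N → ℂ)) := rfl
  have hbw : W.map b = W.map (ae.symm : (Fin N → ℂ) →ₗ[ℂ] (Fin N → ℂ)) := rfl
  have e1 : finrank ℂ (W.map a) = finrank ℂ W := by rw [haw, LinearEquiv.finrank_map_eq]
  have e1' : finrank ℂ (W.map b) = finrank ℂ W := by rw [hbw, LinearEquiv.finrank_map_eq]
  have e2 : finrank ℂ (W.map b ⊓ W : Submodule ℂ (Fin N → ℂ))
      = finrank ℂ (W.map a ⊓ W : Submodule ℂ (Fin N → ℂ)) := by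
    have hmap : (W.map b ⊓ W).map a = W ⊓ W.map a := by
      rw [Submodule.map_inf a hinj, ← Submodule.map_comp, hab, Submodule.map_id]
    have h3 := LinearEquiv.finrank_map_eq ae (W.map b ⊓ W)
    rw [← h3]
    have h4 : Submodule.map (ae : (Fin N → ℂ) →ₗ[ℂ] (Fin N → ℂ)) (W.map b ⊓ W)
        = W ⊓ W.map a := hmap
    rw [h4, inf_comm W (W.map a)]
  have f1 := finrank_map_add_inf_ker p (W.map a)
  have f2 := finrank_map_add_inf_ker p (W.map b)
  rw [hker] at f1 f2
  rw [hfact A, hfact A⁻¹, hrank, hrank]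
  rw [e2, e1', ← e1, ← f1] at f2
  exact Nat.add_right_cancel f2

lemma submatrix_eq_mul {m n m' n' : Type*} [Fintype m] [Fintype n] [DecidableEq m] [DecidableEq n]
    (M : Matrix m n ℂ) (r : m' → m) (c : n' → n) :
    M.submatrix r c = (1 : Matrix m m ℂ).submatrix r id * M * (1 : Matrix n n ℂ).submatrix id c := by
  ext i j
  simp [Matrix.mul_apply, Matrix.one_apply]

lemma rank_submatrix_le' {m n m' n' : Type*} [Fintype m] [Fintype n] [Fintype m'] [Fintype n']
    [DecidableEq m] [DecidableEq n]
    (M : Matrix m n ℂ) (r : m' → m) (c : n' → n) :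
    (M.submatrix r c).rank ≤ M.rank := by
  rw [submatrix_eq_mul M r c]
  exact le_trans (rank_mul_le_left _ _) (rank_mul_le_right _ _)


/-- `A` has quasiseparable rank at most `k`: every submatrix entirely contained in the
strictly lower triangular part, or entirely in the strictly upper triangular part,
has rank at most `k`. -/
def QuasisepRankLE {N : ℕ} (A : Matrix (Fin N) (Fin N) ℂ) (k : ℕ) : Prop :=
  ∀ (m n : ℕ) (r : Fin m → Fin N) (c : Fin n → Fin N),
    ((∀ i j, (c j : ℕ) < (r i : ℕ)) ∨ (∀ i j, (r i : ℕ) < (c j : ℕ))) →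
    (A.submatrix r c).rank ≤ k

lemma lower_case {N : ℕ} (A : Matrix (Fin N) (Fin N) ℂ) (k : ℕ)
    (hinv : IsUnit A) (hA : QuasisepRankLE A k) {m n : ℕ}
    (r : Fin m → Fin N) (c : Fin n → Fin N)
    (h : ∀ i j, (c j : ℕ) < (r i : ℕ)) :
    (A⁻¹.submatrix r c).rank ≤ k := by
  rcases Nat.eq_zero_or_pos m with hm | hm
  · subst hm
    exact le_trans (Matrix.rank_le_card_height _) (by simp)
  rcases Nat.eq_zero_or_pos n with hn | hn
  · subst hn
    exact le_trans (Matrix.rank_le_card_width _) (by simp)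
  have hmne : (Finset.univ.image (fun i : Fin m => (r i : ℕ))).Nonempty :=
    ⟨(r ⟨0, hm⟩ : ℕ), Finset.mem_image_of_mem _ (Finset.mem_univ _)⟩
  set t := Finset.min' _ hmne with ht
  have htr : ∀ i, t ≤ (r i : ℕ) := fun i =>
    Finset.min'_le _ _ (Finset.mem_image_of_mem _ (Finset.mem_univ i))
  have htc : ∀ j, (c j : ℕ) < t := by
    obtain ⟨i0, -, hi0⟩ := Finset.mem_image.mp (Finset.min'_mem _ hmne)
    intro j
    calc ((c j : ℕ)) < (r i0 : ℕ) := h i0 j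
      _ = t := by rw [hi0, ht]
  have hfac : A⁻¹.submatrix r c
      = (A⁻¹.submatrix (fun i : {i : Fin N // t ≤ (i : ℕ)} => i.1)
          (fun j : {j : Fin N // (j : ℕ) < t} => j.1)).submatrix
          (fun i => ⟨r i, htr i⟩) (fun j => ⟨c j, htc j⟩) := rfl
  rw [hfac]
  refine le_trans (rank_submatrix_le' _ _ _) ?_
  rw [key A hinv t]
  set e₁ := (Fintype.equivFin {i : Fin N // t ≤ (i : ℕ)}).symm with he₁
  set e₂ := (Fintype.equivFin {j : Fin N // (j : ℕ) < t}).symm with he₂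
  set B := A.submatrix (fun i : {i : Fin N // t ≤ (i : ℕ)} => i.1)
      (fun j : {j : Fin N // (j : ℕ) < t} => j.1) with hB
  have hb : B = (B.submatrix e₁ e₂).submatrix e₁.symm e₂.symm := by
    ext i j; simp
  rw [hb]
  refine le_trans (rank_submatrix_le' _ _ _) ?_
  exact hA _ _ (fun i => (e₁ i).1) (fun j => (e₂ j).1)
    (Or.inl (fun i j => lt_of_lt_of_le (e₂ j).2 (e₁ i).2))

theorem quasisep_rank_inv {N : ℕ} (A : Matrix (Fin N) (Fin N) ℂ) (k : ℕ)
    (hinv : IsUnit A) (hA : QuasisepRankLE A k) :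
    QuasisepRankLE A⁻¹ k := by
  intro m n r c hcond
  rcases hcond with h | h
  · exact lower_case A k hinv hA r c h
  · have hinvT : IsUnit Aᵀ := by
      rw [Matrix.isUnit_iff_isUnit_det, Matrix.det_transpose,
        ← Matrix.isUnit_iff_isUnit_det]
      exact hinv
    have hAT : QuasisepRankLE Aᵀ k := by
      intro m' n' r' c' hcond'
      have : (Aᵀ.submatrix r' c') = (A.submatrix c' r')ᵀ := rfl
      rw [this, Matrix.rank_transpose]
      rcases hcond' with h1 | h1
      · exact hA _ _ c' r' (Or.inr fun i j => h1 j i)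
      · exact hA _ _ c' r' (Or.inl fun i j => h1 j i)
    have := lower_case Aᵀ k hinvT hAT c r (fun i j => h j i)
    rw [← Matrix.transpose_nonsing_inv] at this
    rw [← Matrix.rank_transpose]
    exact this
end

section
/- For integers a ≥ 0 and N ≥ 0, the evaluation of the ⌊α⌋-th derivative of x^{N+1+a}/(1-x) at x = 1/3 satisfies (d^a/dx^a)[x^{N+1+a}/(1-x)]|_{x=1/3} ≤ 3^a · a! · 2^{-N}, where a = ⌊α⌋ for 1 < α < 2, i.e., a = 1. -/
/-! For `1 < α < 2` the derivative order is `⌊α⌋ = 1`, and the quotient rule evaluates the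
derivative at `1/3` exactly to `(2N + 5) / (4 · 3^N)`. The bound `3 · 2^{-N}` then amounts to
`(2N + 5) · 2^N ≤ 12 · 3^N`, which holds by induction since the left side grows by a factor of
at most `3` at each step. -/

lemma hasDerivAt_pow_succ_div_one_sub {𝕜 : Type*} [NontriviallyNormedField 𝕜] (n : ℕ) {x : 𝕜}
    (hx : x ≠ 1) :
    HasDerivAt (fun y : 𝕜 => y ^ (n + 1) / (1 - y))
      ((n + 1) * x ^ n / (1 - x) + x ^ (n + 1) / (1 - x) ^ 2) x := by
  have hden : 1 - x ≠ 0 := sub_ne_zero.mpr hx.symm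
  have hnum : HasDerivAt (fun y : 𝕜 => y ^ (n + 1)) ((n + 1 : ℕ) * x ^ n) x := by
    simpa using hasDerivAt_pow (n + 1) x
  have hdenom : HasDerivAt (fun y : 𝕜 => 1 - y) (-1) x := by
    simpa using (hasDerivAt_id x).const_sub 1
  refine (hnum.div hdenom hden).congr_deriv ?_
  field_simp
  push_cast
  ring

lemma two_mul_add_five_mul_two_pow_le (N : ℕ) : (2 * N + 5) * 2 ^ N ≤ 12 * 3 ^ N := by
  induction N with
  | zero => norm_num
  | succ n ih =>
    calc (2 * (n + 1) + 5) * 2 ^ (n + 1) ≤ 3 * ((2 * n + 5) * 2 ^ n) := by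
          rw [pow_succ]; nlinarith [Nat.one_le_two_pow (n := n)]
      _ ≤ 3 * (12 * 3 ^ n) := by omega
      _ = 12 * 3 ^ (n + 1) := by ring

/-- For `1 < α < 2` (so `⌊α⌋ = 1`), the `⌊α⌋`-th derivative of `x^{N+1+⌊α⌋}/(1-x)`
evaluated at `x = 1/3` is bounded by `3^⌊α⌋ ⬝ ⌊α⌋! ⬝ 2^{-N}`. -/
theorem taylor_tail_derivative_bound (α : ℝ) (hα : 1 < α) (hα' : α < 2) (N : ℕ) :
    iteratedDeriv (Nat.floor α) (fun x : ℝ => x ^ (N + 1 + Nat.floor α) / (1 - x)) (1 / 3) ≤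
      3 ^ (Nat.floor α) * (Nat.factorial (Nat.floor α) : ℝ) * (2 : ℝ) ^ (-(N : ℤ)) := by
  have hfloor : Nat.floor α = 1 := by
    rw [Nat.floor_eq_iff (by linarith)]
    constructor <;> norm_num <;> linarith
  have hkey : ((2 * N + 5 : ℕ) : ℝ) * 2 ^ N ≤ 12 * 3 ^ N := by
    exact_mod_cast two_mul_add_five_mul_two_pow_le N
  rw [hfloor, iteratedDeriv_one,
    (hasDerivAt_pow_succ_div_one_sub (N + 1) (by norm_num : (1 / 3 : ℝ) ≠ 1)).deriv]
  calc ((N + 1 : ℕ) + 1 : ℝ) * (1 / 3) ^ (N + 1) / (1 - 1 / 3)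
        + (1 / 3) ^ (N + 1 + 1) / (1 - 1 / 3) ^ 2
      = (2 * N + 5 : ℕ) / (4 * 3 ^ N) := by
        push_cast; simp only [one_div, inv_pow]; field_simp; ring
    _ ≤ 3 / 2 ^ N := by
        rw [div_le_div_iff₀ (by positivity) (by positivity)]; linarith
    _ = 3 ^ 1 * (Nat.factorial 1 : ℝ) * (2 : ℝ) ^ (-(N : ℤ)) := by
        rw [zpow_neg, zpow_natCast]; simp [div_eq_mul_inv]
end

section
/- A matrix sequence {A_N}, with A_N of size N×N, is zero-distributed in the sense of singular values if and only if there exist decompositions A_N = R_N + E_N with rank(R_N)/N → 0 and ‖E_N‖₂ → 0 as N → ∞. -/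
/-- The singular values of a complex square matrix: square roots of the eigenvalues of
`Aᴴ * A`. -/
noncomputable def singularValues {N : ℕ} (A : Matrix (Fin N) (Fin N) ℂ) : Fin N → ℝ :=
  fun j => Real.sqrt ((Matrix.isHermitian_conjTranspose_mul_self A).eigenvalues j)

/-- The spectral (L²-operator) norm of a complex square matrix. -/
noncomputable def specNorm {N : ℕ} (A : Matrix (Fin N) (Fin N) ℂ) : ℝ :=
  ‖Matrix.toEuclideanCLM (𝕜 := ℂ) A‖

/-!
On the span `V` of the right singular vectors with singular value `> t`, `‖A x‖ > t ‖x‖`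
for `x ≠ 0`, while on `Vᗮ`, `‖A x‖ ≤ t ‖x‖`. Hence `A P_V`, with `P_V` the orthogonal
projection onto `V`, has rank `#{σⱼ > t}` and lies within `t` of `A` in spectral norm; and if
`A = R + E`, then `V` for `t = ‖E‖` meets `ker R` trivially, so `#{σⱼ > ‖E‖} ≤ rank R`.

Testing against tent functions, zero distribution forces `#{σⱼ > c} = o(N)` for each fixed
`c > 0`, and a diagonal choice `t_N → 0` then gives the splitting. Conversely, the average of
`F(σⱼ) - F(0)` is at most `2 ‖F‖∞ rank R_N / N` from the large singular values plus the
oscillation of `F` on `[0, ‖E_N‖]` from the others.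
-/

open Matrix Filter Finset Topology
open scoped InnerProductSpace ComplexOrder

namespace OrthonormalBasis

variable {𝕜 ι E : Type*} [RCLike 𝕜] [Fintype ι] [NormedAddCommGroup E] [InnerProductSpace 𝕜 E]

theorem repr_apply_eq_zero_of_mem_span_image (b : OrthonormalBasis ι 𝕜 E) {s : Set ι} {x : E}
    (hx : x ∈ Submodule.span 𝕜 (b '' s)) {j : ι} (hj : j ∉ s) : b.repr x j = 0 := by
  obtain ⟨l, hl, rfl⟩ := (Finsupp.mem_span_image_iff_linearCombination 𝕜).mp hx
  rw [← b.coe_toBasis_repr_apply, ← b.coe_toBasis, b.toBasis.repr_linearCombination]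
  exact Finsupp.notMem_support_iff.mp fun h => hj (hl h)

theorem repr_apply_eq_zero_of_mem_orthogonal_span_image (b : OrthonormalBasis ι 𝕜 E) {s : Set ι}
    {x : E} (hx : x ∈ (Submodule.span 𝕜 (b '' s))ᗮ) {j : ι} (hj : j ∈ s) : b.repr x j = 0 := by
  rw [b.repr_apply_apply]
  exact Submodule.inner_right_of_mem_orthogonal
    (Submodule.subset_span (Set.mem_image_of_mem b hj)) hx

theorem norm_sq_eq_sum_norm_repr_sq (b : OrthonormalBasis ι 𝕜 E) (x : E) :
    ‖x‖ ^ 2 = ∑ j, ‖b.repr x j‖ ^ 2 := by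
  rw [← b.repr.norm_map, PiLp.norm_sq_eq_of_L2]

theorem finrank_span_image (b : OrthonormalBasis ι 𝕜 E) (s : Set ι) [Fintype s] :
    Module.finrank 𝕜 (Submodule.span 𝕜 (b '' s)) = Fintype.card s := by
  rw [Set.image_eq_range]
  exact finrank_span_eq_card (b.orthonormal.linearIndependent.comp _ Subtype.val_injective)

end OrthonormalBasis

section Hermitian

variable {𝕜 n : Type*} [RCLike 𝕜] [Fintype n] [DecidableEq n]

theorem Matrix.rank_eq_finrank_range_toEuclideanLin (A : Matrix n n 𝕜) :
    A.rank = Module.finrank 𝕜 (LinearMap.range (toEuclideanLin A)) :=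
  rank_eq_finrank_range_toLin A (PiLp.basisFun 2 𝕜 n) (PiLp.basisFun 2 𝕜 n)

theorem Matrix.IsHermitian.toEuclideanCLM_eigenvectorBasis {H : Matrix n n 𝕜}
    (hH : H.IsHermitian) (j : n) : toEuclideanCLM (𝕜 := 𝕜) H (hH.eigenvectorBasis j) =
      (hH.eigenvalues j : 𝕜) • hH.eigenvectorBasis j := by
  apply WithLp.ofLp_injective
  rw [ofLp_toEuclideanCLM, WithLp.ofLp_smul, ← RCLike.real_smul_eq_coe_smul]
  exact hH.mulVec_eigenvectorBasis j

theorem Matrix.IsHermitian.eigenvectorBasis_repr_toEuclideanCLM {H : Matrix n n 𝕜}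
    (hH : H.IsHermitian) (x : EuclideanSpace 𝕜 n) (j : n) :
    hH.eigenvectorBasis.repr (toEuclideanCLM (𝕜 := 𝕜) H x) j =
      hH.eigenvalues j * hH.eigenvectorBasis.repr x j := by
  have hsymm := isSymmetric_toEuclideanLin_iff.mpr hH (hH.eigenvectorBasis j) x
  rw [← coe_toEuclideanCLM_eq_toEuclideanLin, ContinuousLinearMap.coe_coe,
    hH.toEuclideanCLM_eigenvectorBasis, inner_smul_left, RCLike.conj_ofReal] at hsymm
  rw [OrthonormalBasis.repr_apply_apply, OrthonormalBasis.repr_apply_apply, ← hsymm]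

end Hermitian

theorem exists_pos_tendsto_zero_of_forall_pos_tendsto_zero {u : ℝ → ℕ → ℝ}
    (hu0 : ∀ c N, 0 ≤ u c N) (hu : ∀ c > 0, Tendsto (u c) atTop (𝓝 0)) :
    ∃ t : ℕ → ℝ, (∀ N, 0 < t N) ∧ Tendsto t atTop (𝓝 0) ∧
      Tendsto (fun N => u (t N) N) atTop (𝓝 0) := by
  set h : ℕ → ℝ := fun N => ⨅ c : Set.Ioi (0 : ℝ), ((c : ℝ) + u c N)
  have hbdd : ∀ N, BddBelow (Set.range fun c : Set.Ioi (0 : ℝ) => (c : ℝ) + u c N) :=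
    fun N => ⟨0, by rintro _ ⟨c, rfl⟩; exact add_nonneg c.2.le (hu0 _ _)⟩
  have hh : Tendsto (fun N => h N + 1 / ((N : ℝ) + 1)) atTop (𝓝 0) := by
    suffices Tendsto h atTop (𝓝 0) by
      simpa using this.add tendsto_one_div_add_atTop_nhds_zero_nat
    refine tendsto_order.2 ⟨fun a ha => Eventually.of_forall fun N =>
      ha.trans_le (le_ciInf fun c => add_nonneg c.2.le (hu0 _ _)), fun ε hε => ?_⟩
    filter_upwards [(hu (ε / 2) (half_pos hε)).eventually (gt_mem_nhds (half_pos hε))] with N hN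
    calc h N ≤ ε / 2 + u (ε / 2) N := ciInf_le (hbdd N) ⟨ε / 2, half_pos hε⟩
      _ < ε := by linarith
  -- `c N` nearly minimises `c ↦ c + u c N`: both `c N` and `u (c N) N` are `≤ h N + 1/(N+1)`.
  choose c hc using fun N => exists_lt_of_ciInf_lt (lt_add_of_pos_right (h N)
    (Nat.one_div_pos_of_nat (α := ℝ) (n := N)))
  refine ⟨fun N => c N, fun N => (c N).2, squeeze_zero (fun N => (c N).2.le) (fun N => ?_) hh,
    squeeze_zero (fun N => hu0 _ _) (fun N => ?_) hh⟩
  · linarith [hc N, hu0 (c N) N]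
  · linarith [hc N, (c N).2.out]

theorem abs_sum_sub_apply_zero_le {ι : Type*} [Fintype ι] {F : ℝ → ℝ} {C δ η : ℝ}
    (hC : ∀ x, |F x| ≤ C) (hη : ∀ s, 0 ≤ s → s ≤ δ → |F s - F 0| ≤ η) {σ : ι → ℝ}
    (hσ : ∀ i, 0 ≤ σ i) :
    |∑ i, (F (σ i) - F 0)| ≤ 2 * C * #{i | δ < σ i} + #{i | ¬δ < σ i} * η := by
  calc |∑ i, (F (σ i) - F 0)| ≤ ∑ i, |F (σ i) - F 0| := Finset.abs_sum_le_sum_abs _ _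
    _ ≤ ∑ i, if δ < σ i then 2 * C else η := by
      refine Finset.sum_le_sum fun i _ => ?_
      split_ifs with hi
      · linarith [abs_sub (F (σ i)) (F 0), hC (σ i), hC 0]
      · exact hη _ (hσ i) (not_lt.mp hi)
    _ = 2 * C * #{i | δ < σ i} + #{i | ¬δ < σ i} * η := by
      rw [Finset.sum_ite, Finset.sum_const, Finset.sum_const, nsmul_eq_mul, nsmul_eq_mul, mul_comm]

section SingularValues

variable {N : ℕ}

noncomputable abbrev rightSingularBasis (A : Matrix (Fin N) (Fin N) ℂ) :
    OrthonormalBasis (Fin N) ℂ (EuclideanSpace ℂ (Fin N)) :=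
  (isHermitian_conjTranspose_mul_self A).eigenvectorBasis

theorem singularValues_sq (A : Matrix (Fin N) (Fin N) ℂ) (j : Fin N) :
    singularValues A j ^ 2 = (isHermitian_conjTranspose_mul_self A).eigenvalues j :=
  Real.sq_sqrt ((posSemidef_conjTranspose_mul_self A).eigenvalues_nonneg j)

theorem norm_toEuclideanCLM_apply_sq (A : Matrix (Fin N) (Fin N) ℂ)
    (x : EuclideanSpace ℂ (Fin N)) :
    ‖toEuclideanCLM (𝕜 := ℂ) A x‖ ^ 2 =
      ∑ j, singularValues A j ^ 2 * ‖(rightSingularBasis A).repr x j‖ ^ 2 := by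
  have hadj : (toEuclideanCLM (𝕜 := ℂ) A).adjoint ∘L toEuclideanCLM (𝕜 := ℂ) A =
      toEuclideanCLM (𝕜 := ℂ) (Aᴴ * A) := by
    rw [map_mul, ← star_eq_conjTranspose, map_star, ContinuousLinearMap.star_eq_adjoint]
    rfl
  rw [ContinuousLinearMap.apply_norm_sq_eq_inner_adjoint_left, hadj,
    ← (rightSingularBasis A).repr.inner_map_map, PiLp.inner_apply, map_sum]
  refine Finset.sum_congr rfl fun j _ => ?_
  rw [IsHermitian.eigenvectorBasis_repr_toEuclideanCLM, singularValues_sq, RCLike.inner_apply,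
    map_mul (starRingEnd ℂ), RCLike.conj_ofReal, mul_left_comm, RCLike.mul_conj,
    ← RCLike.ofReal_pow, ← RCLike.ofReal_mul, RCLike.ofReal_re]

theorem norm_toEuclideanCLM_apply_le_of_repr_eq_zero {A : Matrix (Fin N) (Fin N) ℂ} {t : ℝ}
    (ht : 0 ≤ t) {x : EuclideanSpace ℂ (Fin N)}
    (hx : ∀ j, t < singularValues A j → (rightSingularBasis A).repr x j = 0) :
    ‖toEuclideanCLM (𝕜 := ℂ) A x‖ ≤ t * ‖x‖ := by
  refine le_of_pow_le_pow_left₀ two_ne_zero (by positivity) ?_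
  rw [norm_toEuclideanCLM_apply_sq, mul_pow, (rightSingularBasis A).norm_sq_eq_sum_norm_repr_sq,
    Finset.mul_sum]
  refine Finset.sum_le_sum fun j _ => ?_
  rcases lt_or_ge t (singularValues A j) with hj | hj
  · simp [hx j hj]
  · gcongr
    exact Real.sqrt_nonneg _

theorem lt_norm_toEuclideanCLM_apply_of_repr_eq_zero {A : Matrix (Fin N) (Fin N) ℂ} {t : ℝ}
    (ht : 0 ≤ t) {x : EuclideanSpace ℂ (Fin N)} (hx0 : x ≠ 0)
    (hx : ∀ j, singularValues A j ≤ t → (rightSingularBasis A).repr x j = 0) :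
    t * ‖x‖ < ‖toEuclideanCLM (𝕜 := ℂ) A x‖ := by
  refine lt_of_pow_lt_pow_left₀ 2 (norm_nonneg _) ?_
  obtain ⟨i, hi⟩ : ∃ i, (rightSingularBasis A).repr x i ≠ 0 := by
    by_contra! h
    exact hx0 ((rightSingularBasis A).repr.map_eq_zero_iff.mp (PiLp.ext h))
  have hti : t < singularValues A i := lt_of_not_ge fun h => hi (hx i h)
  rw [norm_toEuclideanCLM_apply_sq, mul_pow, (rightSingularBasis A).norm_sq_eq_sum_norm_repr_sq,
    Finset.mul_sum]
  refine Finset.sum_lt_sum (fun j _ => ?_) ⟨i, Finset.mem_univ i, by gcongr⟩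
  rcases le_or_gt (singularValues A j) t with hj | hj
  · simp [hx j hj]
  · gcongr

noncomputable def dominantRightSingularSubspace (A : Matrix (Fin N) (Fin N) ℂ) (t : ℝ) :
    Submodule ℂ (EuclideanSpace ℂ (Fin N)) :=
  Submodule.span ℂ (rightSingularBasis A '' {j | t < singularValues A j})

theorem finrank_dominantRightSingularSubspace (A : Matrix (Fin N) (Fin N) ℂ) (t : ℝ) :
    Module.finrank ℂ (dominantRightSingularSubspace A t) = #{j | t < singularValues A j} := by
  rw [dominantRightSingularSubspace, OrthonormalBasis.finrank_span_image]
  simp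

theorem card_specNorm_lt_singularValues_add_le_rank (R E : Matrix (Fin N) (Fin N) ℂ) :
    #{j | specNorm E < singularValues (R + E) j} ≤ R.rank := by
  have hdisj : Disjoint (dominantRightSingularSubspace (R + E) (specNorm E))
      (LinearMap.ker (toEuclideanLin R)) := by
    refine Submodule.disjoint_def.mpr fun x hxV hxK => ?_
    by_contra hx0
    have hlt := lt_norm_toEuclideanCLM_apply_of_repr_eq_zero (norm_nonneg _) hx0
      fun j hj => OrthonormalBasis.repr_apply_eq_zero_of_mem_span_image _ hxV (not_lt.mpr hj)
    have hRx : toEuclideanCLM (𝕜 := ℂ) R x = 0 := hxK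
    rw [map_add, _root_.add_apply, hRx, zero_add] at hlt
    exact hlt.not_ge ((toEuclideanCLM (𝕜 := ℂ) E).le_opNorm x)
  have hsum := Submodule.finrank_add_finrank_le_of_disjoint hdisj
  have hrank_nullity := LinearMap.finrank_range_add_finrank_ker (toEuclideanLin R)
  rw [finrank_dominantRightSingularSubspace, finrank_euclideanSpace_fin] at hsum
  rw [finrank_euclideanSpace_fin] at hrank_nullity
  rw [rank_eq_finrank_range_toEuclideanLin]
  omega

theorem exists_rank_le_card_specNorm_sub_le (A : Matrix (Fin N) (Fin N) ℂ) {t : ℝ} (ht : 0 ≤ t) :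
    ∃ R : Matrix (Fin N) (Fin N) ℂ,
      R.rank ≤ #{j | t < singularValues A j} ∧ specNorm (A - R) ≤ t := by
  set V := dominantRightSingularSubspace A t
  set P := (toEuclideanCLM (𝕜 := ℂ)).symm V.starProjection
  have hP : toEuclideanCLM (𝕜 := ℂ) P = V.starProjection := StarAlgEquiv.apply_symm_apply _ _
  refine ⟨A * P, ?_, ContinuousLinearMap.opNorm_le_bound _ ht fun x => ?_⟩
  · calc (A * P).rank ≤ P.rank := rank_mul_le_right _ _
      _ = Module.finrank ℂ V := by
        rw [rank_eq_finrank_range_toEuclideanLin, ← coe_toEuclideanCLM_eq_toEuclideanLin, hP,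
          Submodule.range_starProjection]
      _ = #{j | t < singularValues A j} := finrank_dominantRightSingularSubspace A t
  · have hx : toEuclideanCLM (𝕜 := ℂ) (A - A * P) x =
        toEuclideanCLM (𝕜 := ℂ) A (x - V.starProjection x) := by
      rw [map_sub, map_mul, hP, map_sub]
      rfl
    rw [hx]
    calc _ ≤ t * ‖x - V.starProjection x‖ :=
          norm_toEuclideanCLM_apply_le_of_repr_eq_zero ht fun j hj =>
            OrthonormalBasis.repr_apply_eq_zero_of_mem_orthogonal_span_image _
              (V.sub_starProjection_mem_orthogonal x) hj
      _ ≤ t * ‖x‖ := by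
          gcongr
          rw [← Submodule.starProjection_orthogonal_val]
          exact Vᗮ.norm_starProjection_apply_le x

def ZeroDistributed (A : (N : ℕ) → Matrix (Fin N) (Fin N) ℂ) : Prop :=
  ∀ F : ℝ → ℝ, Continuous F → HasCompactSupport F →
    Tendsto (fun N : ℕ => (1 / (N : ℝ)) * ∑ j : Fin N, F (singularValues (A N) j))
      atTop (𝓝 (F 0))

theorem ZeroDistributed.tendsto_card_lt_singularValues_div
    {A : (N : ℕ) → Matrix (Fin N) (Fin N) ℂ} (hA : ZeroDistributed A) {c : ℝ} (hc : 0 < c) :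
    Tendsto (fun N : ℕ => (#{j | c < singularValues (A N) j} : ℝ) / N) atTop (𝓝 0) := by
  set F : ℝ → ℝ := fun x => max (1 - |x| / c) 0
  have hF_le_one : ∀ x, F x ≤ 1 := fun x =>
    max_le (by linarith [div_nonneg (abs_nonneg x) hc.le]) zero_le_one
  have hF_eq_zero : ∀ x, c ≤ |x| → F x = 0 := fun x hx =>
    max_eq_right (by linarith [(one_le_div hc).2 hx])
  have hF_supp : HasCompactSupport F := HasCompactSupport.intro (isCompact_Icc (a := -c) (b := c))
    fun x hx => hF_eq_zero x (le_of_lt (by rwa [Set.mem_Icc, ← abs_le, not_le] at hx))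
  have hlim := (hA F (by fun_prop) hF_supp).const_sub 1
  rw [show F 0 = 1 by simp [F], sub_self] at hlim
  refine squeeze_zero' (Eventually.of_forall fun N => by positivity) ?_ hlim
  filter_upwards [eventually_ne_atTop 0] with N hN
  have hcount : (#{j | c < singularValues (A N) j} : ℝ) ≤
      ∑ j, (1 - F (singularValues (A N) j)) := by
    rw [Finset.natCast_card_filter]
    refine Finset.sum_le_sum fun j _ => ?_
    split_ifs with hj
    · rw [hF_eq_zero _ (hj.le.trans (le_abs_self _)), sub_zero]
    · linarith [hF_le_one (singularValues (A N) j)]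
  calc _ ≤ (∑ j, (1 - F (singularValues (A N) j))) / N := by gcongr
    _ = 1 - 1 / (N : ℝ) * ∑ j, F (singularValues (A N) j) := by
      rw [Finset.sum_sub_distrib]
      field_simp
      simp

theorem ZeroDistributed.exists_low_rank_add_small_norm
    {A : (N : ℕ) → Matrix (Fin N) (Fin N) ℂ} (hA : ZeroDistributed A) :
    ∃ R E : (N : ℕ) → Matrix (Fin N) (Fin N) ℂ, (∀ N, A N = R N + E N) ∧
      Tendsto (fun N => ((R N).rank : ℝ) / N) atTop (𝓝 0) ∧
      Tendsto (fun N => specNorm (E N)) atTop (𝓝 0) := by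
  obtain ⟨t, ht0, ht, hcount⟩ := exists_pos_tendsto_zero_of_forall_pos_tendsto_zero
    (u := fun c N => (#{j | c < singularValues (A N) j} : ℝ) / N) (fun _ _ => by positivity)
    fun _ hc => hA.tendsto_card_lt_singularValues_div hc
  choose R hR_rank hR_norm using fun N => exists_rank_le_card_specNorm_sub_le (A N) (ht0 N).le
  refine ⟨R, fun N => A N - R N, fun N => (add_sub_cancel _ _).symm,
    squeeze_zero (fun _ => by positivity) (fun N => ?_) hcount,
    squeeze_zero (fun _ => norm_nonneg _) hR_norm ht⟩
  gcongr
  exact_mod_cast hR_rank N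

theorem abs_mean_sub_apply_zero_le {F : ℝ → ℝ} {C η : ℝ} (hC : ∀ x, |F x| ≤ C)
    (R E : Matrix (Fin N) (Fin N) ℂ) (hη : ∀ s, 0 ≤ s → s ≤ specNorm E → |F s - F 0| ≤ η)
    (hN : 0 < N) :
    |1 / (N : ℝ) * ∑ j, F (singularValues (R + E) j) - F 0| ≤ 2 * C * (R.rank / N) + η := by
  have hη0 : 0 ≤ η := by simpa using hη 0 le_rfl (norm_nonneg _)
  have hN' : (0 : ℝ) < N := Nat.cast_pos.mpr hN
  have hlarge : (#{j | specNorm E < singularValues (R + E) j} : ℝ) ≤ R.rank :=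
    mod_cast card_specNorm_lt_singularValues_add_le_rank R E
  have hsmall : (#{j | ¬specNorm E < singularValues (R + E) j} : ℝ) ≤ N :=
    mod_cast (Finset.card_filter_le _ _).trans_eq (Finset.card_fin N)
  have hmean : 1 / (N : ℝ) * ∑ j, F (singularValues (R + E) j) - F 0 =
      (∑ j, (F (singularValues (R + E) j) - F 0)) / N := by
    rw [Finset.sum_sub_distrib, Finset.sum_const, Finset.card_fin, nsmul_eq_mul]
    field_simp
  rw [hmean, abs_div, Nat.abs_cast, div_le_iff₀ hN']
  calc _ ≤ 2 * C * #{j | specNorm E < singularValues (R + E) j} +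
        #{j | ¬specNorm E < singularValues (R + E) j} * η :=
        abs_sum_sub_apply_zero_le hC hη fun j => Real.sqrt_nonneg _
    _ ≤ 2 * C * R.rank + N * η := by
        have hC0 : 0 ≤ C := (abs_nonneg _).trans (hC 0)
        gcongr
    _ = (2 * C * (R.rank / N) + η) * N := by field_simp

theorem zeroDistributed_of_tendsto_rank_of_tendsto_specNorm
    {A R E : (N : ℕ) → Matrix (Fin N) (Fin N) ℂ} (hsplit : ∀ N, A N = R N + E N)
    (hR : Tendsto (fun N => ((R N).rank : ℝ) / N) atTop (𝓝 0))
    (hE : Tendsto (fun N => specNorm (E N)) atTop (𝓝 0)) :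
    ZeroDistributed A := by
  intro F hF hF_supp
  obtain ⟨C, hC⟩ := hF.bounded_above_of_compact_support hF_supp
  have hC0 : 0 ≤ C := (norm_nonneg _).trans (hC 0)
  refine Metric.tendsto_nhds.2 fun ε hε => ?_
  obtain ⟨δ, hδ, hFδ⟩ := Metric.continuous_iff.mp hF 0 (ε / 2) (half_pos hε)
  have hε' : 0 < ε / (4 * (C + 1)) := by positivity
  filter_upwards [eventually_gt_atTop 0, hE.eventually (gt_mem_nhds hδ),
    hR.eventually (gt_mem_nhds hε')] with N hN hEN hRN
  have hrank : 2 * (C + 1) * ((R N).rank / N) < ε / 2 :=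
    calc _ < 2 * (C + 1) * (ε / (4 * (C + 1))) := by gcongr
      _ = ε / 2 := by field_simp; ring
  have hrank0 : (0 : ℝ) ≤ (R N).rank / N := by positivity
  rw [Real.dist_eq, hsplit N]
  calc _ ≤ 2 * C * ((R N).rank / N) + ε / 2 :=
        abs_mean_sub_apply_zero_le (fun x => (Real.norm_eq_abs _).symm.trans_le (hC x)) _ _
          (fun s hs hsE => (hFδ s (by rw [Real.dist_eq, sub_zero, abs_of_nonneg hs]; linarith)).le)
          hN
    _ < ε := by linarith

end SingularValues

/-- A matrix sequence is zero-distributed in the sense of the singular values iff it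
splits as `A_N = R_N + E_N` with `rank R_N / N → 0` and `‖E_N‖₂ → 0`. -/
theorem zero_distributed_iff_rank_plus_small_norm
    (A : (N : ℕ) → Matrix (Fin N) (Fin N) ℂ) :
    (∀ F : ℝ → ℝ, Continuous F → HasCompactSupport F →
      Filter.Tendsto (fun N : ℕ => (1 / (N : ℝ)) * ∑ j : Fin N, F (singularValues (A N) j))
        Filter.atTop (nhds (F 0))) ↔
    ∃ (R E : (N : ℕ) → Matrix (Fin N) (Fin N) ℂ),
      (∀ N, A N = R N + E N) ∧
      Filter.Tendsto (fun N : ℕ => ((R N).rank : ℝ) / N) Filter.atTop (nhds 0) ∧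
      Filter.Tendsto (fun N : ℕ => specNorm (E N)) Filter.atTop (nhds 0) :=
  ⟨ZeroDistributed.exists_low_rank_add_small_norm, fun ⟨_, _, hsplit, hR, hE⟩ =>
    zeroDistributed_of_tendsto_rank_of_tendsto_specNorm hsplit hR hE⟩
end
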